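/- Let S ⊂ D(X) be a set of monic polynomials and Irr(S) = {u ∈ T : u ≠ a·d^ī(s̄)·b for all s ∈ S, a, b ∈ T, and composites D^ī}. Then every f ∈ D(X) can be written as f = Σ α_i u_i + Σ β_j v_{s_j}, where u_i ∈ Irr(S) with u_i ≤ f̄, and each v_{s_j} is an (S,D)-word with leading term ≤ f̄. -/

import Mathlib

/-- A letter `D^ī(x)` of the free differential algebra: the word `ī` of operator
indices together with the generator `x`. -/
abbrev Letter (J X : Type*) := List J × X

variable {k J X : Type*} [CommRing k]

/-- The monomial of `D(X) = k⟨(D^ω(X))^*⟩` corresponding to a word `u ∈ T`. -/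
noncomputable def monoW (u : List (Letter J X)) : MonoidAlgebra k (FreeMonoid (Letter J X)) :=
  MonoidAlgebra.single (FreeMonoid.ofList u) 1

/-- Action of the derivation `D_j` on a word, defined by the Leibniz rule. -/
noncomputable def derivMon (j : J) : List (Letter J X) → MonoidAlgebra k (FreeMonoid (Letter J X))
  | [] => 0
  | (a, x) :: v =>
      monoW ((j :: a, x) :: v) + monoW [(a, x)] * derivMon j v

/-- The derivation `D_j` on the free differential algebra `D(X)`. -/
noncomputable def Dop (j : J) :
    MonoidAlgebra k (FreeMonoid (Letter J X)) →ₗ[k] MonoidAlgebra k (FreeMonoid (Letter J X)) :=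
  (Finsupp.lsum k fun u =>
    LinearMap.toSpanSingleton k (MonoidAlgebra k (FreeMonoid (Letter J X))) (derivMon j u.toList)).comp
    (MonoidAlgebra.coeffLinearEquiv k).toLinearMap

/-- The composite operator `D^j̄ = D_{j₁} ∘ ⋯ ∘ D_{jₙ}`. -/
noncomputable def Dops (jb : List J) :
    MonoidAlgebra k (FreeMonoid (Letter J X)) →ₗ[k] MonoidAlgebra k (FreeMonoid (Letter J X)) :=
  jb.foldr (fun j m => (Dop j).comp m) LinearMap.id

/-- `d^j̄(u)`: prepend the operator word `j̄` to the first letter of `u`. -/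
def dHat (jb : List J) : List (Letter J X) → List (Letter J X)
  | [] => []
  | (a, x) :: v => (jb ++ a, x) :: v

/-- Coefficient of the word `u` in `f ∈ D(X)`. -/
noncomputable def coeffW (f : MonoidAlgebra k (FreeMonoid (Letter J X)))
    (u : List (Letter J X)) : k := f.coeff (FreeMonoid.ofList u)

section Order
variable [LinearOrder J] [LinearOrder X]

/-- The order on letters: compare `wt(D^ī(x)) = (x; m, i₁, …, i_m)` lexicographically. -/
def LetterLt (a b : Letter J X) : Prop :=
  a.2 < b.2 ∨ (a.2 = b.2 ∧ (a.1.length < b.1.length ∨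
    (a.1.length = b.1.length ∧ List.Lex (· < ·) a.1 b.1)))

/-- The deg-lex order on words: first by length, then lexicographically. -/
def DegLexLt (u v : List (Letter J X)) : Prop :=
  u.length < v.length ∨ (u.length = v.length ∧ List.Lex LetterLt u v)

/-- `u` is the leading term of `f`. -/
def IsLT (f : MonoidAlgebra k (FreeMonoid (Letter J X))) (u : List (Letter J X)) : Prop :=
  coeffW f u ≠ 0 ∧ ∀ v, coeffW f v ≠ 0 → v ≠ u → DegLexLt v u

/-- `f` is monic with leading term `u`. -/
def MonicW (f : MonoidAlgebra k (FreeMonoid (Letter J X))) (u : List (Letter J X)) : Prop :=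
  IsLT f u ∧ coeffW f u = 1

end Order

/-- Membership in the `D`-ideal generated by `S`. -/
inductive InDIdeal (S : Set (MonoidAlgebra k (FreeMonoid (Letter J X)))) :
    MonoidAlgebra k (FreeMonoid (Letter J X)) → Prop
  | of : ∀ s ∈ S, InDIdeal S s
  | zero : InDIdeal S 0
  | add : ∀ {a b}, InDIdeal S a → InDIdeal S b → InDIdeal S (a + b)
  | smul : ∀ (c : k) {a}, InDIdeal S a → InDIdeal S (c • a)
  | mul_left : ∀ (g) {a}, InDIdeal S a → InDIdeal S (g * a)
  | mul_right : ∀ (g) {a}, InDIdeal S a → InDIdeal S (a * g)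
  | deriv : ∀ (j : J) {a}, InDIdeal S a → InDIdeal S (Dop j a)

/-- `(S,𝒟)`-words: `a · D^j̄(s) · b` with `s ∈ S`. -/
def IsSDWord (S : Set (MonoidAlgebra k (FreeMonoid (Letter J X))))
    (g : MonoidAlgebra k (FreeMonoid (Letter J X))) : Prop :=
  ∃ (a b : List (Letter J X)) (jb : List J), ∃ s ∈ S, g = monoW a * Dops jb s * monoW b

section Order2
variable [LinearOrder J] [LinearOrder X]

/-- `f ≡ 0 mod (S, w)`: `f` is a linear combination of `(S,𝒟)`-words with leading term `< w`. -/
def TrivMod (S : Set (MonoidAlgebra k (FreeMonoid (Letter J X))))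
    (w : List (Letter J X)) (f : MonoidAlgebra k (FreeMonoid (Letter J X))) : Prop :=
  f ∈ Submodule.span k {g | IsSDWord S g ∧ ∃ l, IsLT g l ∧ DegLexLt l w}

/-- `S` is a Gröbner–Shirshov basis: all compositions of elements of `S` are trivial. -/
def IsGSB (S : Set (MonoidAlgebra k (FreeMonoid (Letter J X)))) : Prop :=
  ∀ f ∈ S, ∀ g ∈ S, ∀ fb gb, MonicW f fb → MonicW g gb →
    (∀ a b jb, gb ≠ [] → fb = a ++ dHat jb gb ++ b →
        TrivMod S fb (f - monoW a * Dops jb g * monoW b)) ∧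
    (∀ ib b, fb ≠ [] → dHat ib fb = gb ++ b →
        TrivMod S (dHat ib fb) (Dops ib f - g * monoW b)) ∧
    (∀ a b jb, a ≠ [] → b ≠ [] → fb ≠ [] → gb ≠ [] →
        fb ++ b = a ++ dHat jb gb → (fb ++ b).length < fb.length + gb.length →
        TrivMod S (fb ++ b) (f * monoW b - monoW a * Dops jb g))

/-- `Irr(S)`: words containing no subword `d^ī(s̄)` with `s ∈ S`. -/
def Irr (S : Set (MonoidAlgebra k (FreeMonoid (Letter J X)))) : Set (List (Letter J X)) :=
  {u | ¬ ∃ (a b : List (Letter J X)) (ib : List J), ∃ s ∈ S, ∃ sb, IsLT s sb ∧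
        u = a ++ dHat ib sb ++ b}

end Order2

/-- The `D`-ideal generated by `S`, as a `k`-submodule of `D(X)`. -/
noncomputable def DIdealSub (S : Set (MonoidAlgebra k (FreeMonoid (Letter J X)))) :
    Submodule k (MonoidAlgebra k (FreeMonoid (Letter J X))) where
  carrier := {f | InDIdeal S f}
  add_mem' := fun h1 h2 => InDIdeal.add h1 h2
  zero_mem' := InDIdeal.zero
  smul_mem' := fun c _ h => InDIdeal.smul c h

/-! ### Auxiliary order lemmas -/

section OrderAux
variable {α : Type*}

/-- Generic deg-lex relation on lists. -/
def DLex (r : α → α → Prop) (u v : List α) : Prop :=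
  u.length < v.length ∨ (u.length = v.length ∧ List.Lex r u v)

theorem lexTrans {r : α → α → Prop} (tr : ∀ a b c, r a b → r b c → r a c) :
    ∀ {u v w : List α}, List.Lex r u v → List.Lex r v w → List.Lex r u w
  | _, _, _, .nil, .rel _ => .nil
  | _, _, _, .nil, .cons _ => .nil
  | _, _, _, .rel h, .rel h' => .rel (tr _ _ _ h h')
  | _, _, _, .rel h, .cons _ => .rel h
  | _, _, _, .cons _, .rel h => .rel h
  | _, _, _, .cons h, .cons h' => .cons (lexTrans tr h h')

theorem lexIrrefl {r : α → α → Prop} (irr : ∀ a, ¬ r a a) :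
    ∀ {u : List α}, ¬ List.Lex r u u
  | _, .rel h => irr _ h
  | _, .cons h => lexIrrefl irr h

theorem lexTricho {r : α → α → Prop} (tri : ∀ a b, r a b ∨ a = b ∨ r b a) :
    ∀ u v : List α, List.Lex r u v ∨ u = v ∨ List.Lex r v u
  | [], [] => Or.inr (Or.inl rfl)
  | [], _ :: _ => Or.inl .nil
  | _ :: _, [] => Or.inr (Or.inr .nil)
  | a :: u, b :: v => by
    rcases tri a b with h | rfl | h
    · exact Or.inl (.rel h)
    · rcases lexTricho tri u v with h | rfl | h
      · exact Or.inl (.cons h)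
      · exact Or.inr (Or.inl rfl)
      · exact Or.inr (Or.inr (.cons h))
    · exact Or.inr (Or.inr (.rel h))

theorem lex_append_same {r : α → α → Prop} :
    ∀ {u v : List α}, u.length = v.length → List.Lex r u v →
      ∀ b, List.Lex r (u ++ b) (v ++ b)
  | _, _, h, .nil, _ => by simp at h
  | _, _, _, .rel hr, _ => .rel hr
  | _, _, h, .cons hl, b => .cons (lex_append_same (by simpa using h) hl b)

theorem DLex.trans {r : α → α → Prop} (tr : ∀ a b c, r a b → r b c → r a c)
    {u v w : List α} (h1 : DLex r u v) (h2 : DLex r v w) : DLex r u w := by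
  rcases h1 with h1 | ⟨e1, l1⟩ <;> rcases h2 with h2 | ⟨e2, l2⟩
  · exact Or.inl (h1.trans h2)
  · exact Or.inl (e2 ▸ h1)
  · exact Or.inl (e1 ▸ h2)
  · exact Or.inr ⟨e1.trans e2, lexTrans tr l1 l2⟩

theorem DLex.irrefl {r : α → α → Prop} (irr : ∀ a, ¬ r a a) (u : List α) :
    ¬ DLex r u u := by
  rintro (h | ⟨-, h⟩)
  · exact lt_irrefl _ h
  · exact lexIrrefl irr h

theorem DLex.tricho {r : α → α → Prop} (tri : ∀ a b, r a b ∨ a = b ∨ r b a)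
    (u v : List α) : DLex r u v ∨ u = v ∨ DLex r v u := by
  rcases lt_trichotomy u.length v.length with h | h | h
  · exact Or.inl (Or.inl h)
  · rcases lexTricho tri u v with hl | rfl | hl
    · exact Or.inl (Or.inr ⟨h, hl⟩)
    · exact Or.inr (Or.inl rfl)
    · exact Or.inr (Or.inr (Or.inr ⟨h.symm, hl⟩))
  · exact Or.inr (Or.inr (Or.inl h))

/-- Lists of a fixed length with the lexicographic relation. -/
private def FLex (r : α → α → Prop) (n : ℕ)
    (u v : {l : List α // l.length = n}) : Prop :=
  List.Lex r u.1 v.1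

private theorem flex_wf {r : α → α → Prop} (hr : WellFounded r) :
    ∀ n, WellFounded (FLex r (α := α) n)
  | 0 => ⟨fun u => Acc.intro _ fun v hv => by
      obtain ⟨l, hl⟩ := u
      rw [List.length_eq_zero_iff] at hl
      subst hl
      exact absurd hv List.not_lex_nil⟩
  | n + 1 => by
    have ih := flex_wf hr n
    have hp : WellFounded (Prod.Lex r (FLex r (α := α) n)) := hr.prod_lex ih
    have hinv := InvImage.wf
      (fun u : {l : List α // l.length = n + 1} =>
        (u.1.head (by have h2 := u.2; intro h; rw [h] at h2; simp at h2),
          (⟨u.1.tail, by simp [u.2]⟩ : {l : List α // l.length = n}))) hp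
    refine Subrelation.wf ?_ hinv
    rintro ⟨_ | ⟨a, s⟩, hu⟩ ⟨_ | ⟨b, t⟩, hv⟩ h
    · simp at hu
    · simp at hu
    · simp at hv
    · cases h with
      | rel h => exact Prod.Lex.left _ _ h
      | cons h => exact Prod.Lex.right _ h

theorem DLex.wf {r : α → α → Prop} (hr : WellFounded r) : WellFounded (DLex r) := by
  have hp : WellFounded (PSigma.Lex Nat.lt (fun n => FLex r (α := α) n)) :=
    WellFounded.psigma_lex (Nat.lt_wfRel.wf) (fun n => flex_wf hr n)
  refine Subrelation.wf ?_ (InvImage.wf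
    (fun l : List α =>
      (⟨l.length, ⟨l, rfl⟩⟩ : (n : ℕ) ×' {l : List α // l.length = n})) hp)
  rintro u v (h | ⟨e, hlex⟩)
  · exact PSigma.Lex.left _ _ h
  · have key : ∀ (n : ℕ) (hv : v.length = n) (hu : u.length = n),
        PSigma.Lex Nat.lt (fun n => FLex r (α := α) n)
          ⟨u.length, ⟨u, rfl⟩⟩ ⟨n, ⟨v, hv⟩⟩ := by
      intro n hv hu
      subst hu
      exact PSigma.Lex.right _ hlex
    exact key v.length rfl e

end OrderAux

/-! ### Facts about `LetterLt` and `DegLexLt` -/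

section LetterFacts
variable [LinearOrder J] [LinearOrder X]

theorem letterLt_trans : ∀ {p q r : Letter J X}, LetterLt p q → LetterLt q r → LetterLt p r := by
  rintro ⟨a, x⟩ ⟨b, y⟩ ⟨c, z⟩ h1 h2
  rcases h1 with h1 | ⟨rfl, h1⟩ <;> rcases h2 with h2 | ⟨rfl, h2⟩
  · exact Or.inl (h1.trans h2)
  · exact Or.inl h1
  · exact Or.inl h2
  · refine Or.inr ⟨rfl, ?_⟩
    rcases h1 with h1 | ⟨e1, h1⟩ <;> rcases h2 with h2 | ⟨e2, h2⟩
    · exact Or.inl (h1.trans h2)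
    · exact Or.inl (e2 ▸ h1)
    · exact Or.inl (e1 ▸ h2)
    · exact Or.inr ⟨e1.trans e2, lexTrans (r := (· < ·)) (fun _ _ _ h h' => lt_trans h h') h1 h2⟩

theorem letterLt_irrefl (p : Letter J X) : ¬ LetterLt p p := by
  rintro (h | ⟨-, h | ⟨-, h⟩⟩)
  · exact lt_irrefl _ h
  · exact lt_irrefl _ h
  · exact lexIrrefl (fun a => lt_irrefl a) h

theorem letterLt_tricho (p q : Letter J X) : LetterLt p q ∨ p = q ∨ LetterLt q p := by
  obtain ⟨a, x⟩ := p; obtain ⟨b, y⟩ := q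
  rcases lt_trichotomy x y with h | rfl | h
  · exact Or.inl (Or.inl h)
  · rcases lt_trichotomy a.length b.length with h | h | h
    · exact Or.inl (Or.inr ⟨rfl, Or.inl h⟩)
    · rcases lexTricho (fun a b : J => lt_trichotomy a b) a b with hl | rfl | hl
      · exact Or.inl (Or.inr ⟨rfl, Or.inr ⟨h, hl⟩⟩)
      · exact Or.inr (Or.inl rfl)
      · exact Or.inr (Or.inr (Or.inr ⟨rfl, Or.inr ⟨h.symm, hl⟩⟩))
    · exact Or.inr (Or.inr (Or.inr ⟨rfl, Or.inl h⟩))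
  · exact Or.inr (Or.inr (Or.inl h))

theorem letterLt_wf [IsWellOrder J (· < ·)] [IsWellOrder X (· < ·)] :
    WellFounded (LetterLt (J := J) (X := X)) := by
  have h1 : WellFounded (DLex ((· < ·) : J → J → Prop)) := DLex.wf (IsWellFounded.wf)
  have h2 : WellFounded ((· < ·) : X → X → Prop) := IsWellFounded.wf
  refine Subrelation.wf ?_ (InvImage.wf (fun p : Letter J X => (p.2, p.1)) (h2.prod_lex h1))
  rintro ⟨a, x⟩ ⟨b, y⟩ (h | ⟨(e : x = y), h⟩)
  · exact Prod.Lex.left _ _ h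
  · subst e
    exact Prod.Lex.right _ h

theorem degLexLt_eq : (DegLexLt : List (Letter J X) → _ → Prop) = DLex LetterLt := rfl

theorem degLexLt_trans {u v w : List (Letter J X)}
    (h1 : DegLexLt u v) (h2 : DegLexLt v w) : DegLexLt u w :=
  DLex.trans (r := LetterLt) (fun _ _ _ h h' => letterLt_trans h h') h1 h2

theorem degLexLt_irrefl (u : List (Letter J X)) : ¬ DegLexLt u u :=
  DLex.irrefl letterLt_irrefl u

theorem degLexLt_tricho (u v : List (Letter J X)) :
    DegLexLt u v ∨ u = v ∨ DegLexLt v u :=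
  DLex.tricho letterLt_tricho u v

theorem degLexLt_wf [IsWellOrder J (· < ·)] [IsWellOrder X (· < ·)] :
    WellFounded (DegLexLt (J := J) (X := X)) :=
  DLex.wf letterLt_wf

theorem degLexLt_append {u v : List (Letter J X)} (a b : List (Letter J X))
    (h : DegLexLt u v) : DegLexLt (a ++ u ++ b) (a ++ v ++ b) := by
  rcases h with h | ⟨e, hl⟩
  · exact Or.inl (by simpa using h)
  · refine Or.inr ⟨by simp [e], ?_⟩
    have h2 := lex_append_same e hl b
    have h3 := List.Lex.append_left LetterLt h2 a
    simpa [List.append_assoc] using h3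

end LetterFacts

/-! ### Coefficient lemmas -/

section CoeffAux

theorem coeffW_monoW [DecidableEq (Letter J X)] (u v : List (Letter J X)) :
    coeffW (monoW u : MonoidAlgebra k (FreeMonoid (Letter J X))) v
      = if u = v then 1 else 0 := by
  classical
  simp only [coeffW, monoW, MonoidAlgebra.coeff_single, Finsupp.single_apply, EmbeddingLike.apply_eq_iff_eq]

theorem coeffW_sub (f g : MonoidAlgebra k (FreeMonoid (Letter J X)))
    (u : List (Letter J X)) : coeffW (f - g) u = coeffW f u - coeffW g u := rfl

theorem coeffW_smul (c : k) (f : MonoidAlgebra k (FreeMonoid (Letter J X)))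
    (u : List (Letter J X)) : coeffW (c • f) u = c * coeffW f u := rfl

theorem coeffW_add (f g : MonoidAlgebra k (FreeMonoid (Letter J X)))
    (u : List (Letter J X)) : coeffW (f + g) u = coeffW f u + coeffW g u := rfl

theorem coeffW_monoW_mul (a u : List (Letter J X))
    (g : MonoidAlgebra k (FreeMonoid (Letter J X))) :
    coeffW (monoW a * g) (a ++ u) = coeffW g u := by
  unfold coeffW monoW
  rw [FreeMonoid.ofList_append, MonoidAlgebra.coeff_single_mul_eq_mul_coeff, one_mul]
  intro c _
  exact ⟨fun h => mul_left_cancel h, fun h => by rw [h]⟩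

theorem coeffW_mul_monoW (b u : List (Letter J X))
    (g : MonoidAlgebra k (FreeMonoid (Letter J X))) :
    coeffW (g * monoW b) (u ++ b) = coeffW g u := by
  unfold coeffW monoW
  rw [FreeMonoid.ofList_append, MonoidAlgebra.coeff_mul_single_eq_coeff_mul, mul_one]
  intro c _
  exact ⟨fun h => mul_right_cancel h, fun h => by rw [h]⟩

theorem coeffW_monoW_mul_support {a w : List (Letter J X)}
    {g : MonoidAlgebra k (FreeMonoid (Letter J X))}
    (h : coeffW (monoW a * g) w ≠ 0) :
    ∃ u, coeffW g u ≠ 0 ∧ w = a ++ u := by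
  classical
  have hw : FreeMonoid.ofList w ∈ (monoW a * g :
      MonoidAlgebra k (FreeMonoid (Letter J X))).coeff.support := by
    simpa [coeffW, Finsupp.mem_support_iff] using h
  have hsub := MonoidAlgebra.support_coeff_mul_subset (monoW a : MonoidAlgebra k (FreeMonoid (Letter J X))) g
  have := hsub hw
  rw [Finset.mem_mul] at this
  obtain ⟨x, hx, y, hy, hxy⟩ := this
  have hx' : x = FreeMonoid.ofList a := by
    have := Finsupp.support_single_subset (a := FreeMonoid.ofList a) (b := (1 : k)) hx
    simpa [monoW] using this
  refine ⟨FreeMonoid.toList y, ?_, ?_⟩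
  · simpa [coeffW, Finsupp.mem_support_iff] using hy
  · have : FreeMonoid.ofList w = FreeMonoid.ofList (a ++ FreeMonoid.toList y) := by
      rw [FreeMonoid.ofList_append, ← hxy, hx']
      simp
    exact FreeMonoid.ofList.injective this

theorem coeffW_mul_monoW_support {b w : List (Letter J X)}
    {g : MonoidAlgebra k (FreeMonoid (Letter J X))}
    (h : coeffW (g * monoW b) w ≠ 0) :
    ∃ u, coeffW g u ≠ 0 ∧ w = u ++ b := by
  classical
  have hw : FreeMonoid.ofList w ∈ (g * monoW b :
      MonoidAlgebra k (FreeMonoid (Letter J X))).coeff.support := by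
    simpa [coeffW, Finsupp.mem_support_iff] using h
  have hsub := MonoidAlgebra.support_coeff_mul_subset g (monoW b : MonoidAlgebra k (FreeMonoid (Letter J X)))
  have := hsub hw
  rw [Finset.mem_mul] at this
  obtain ⟨x, hx, y, hy, hxy⟩ := this
  have hy' : y = FreeMonoid.ofList b := by
    have := Finsupp.support_single_subset (a := FreeMonoid.ofList b) (b := (1 : k)) hy
    simpa [monoW] using this
  refine ⟨FreeMonoid.toList x, ?_, ?_⟩
  · simpa [coeffW, Finsupp.mem_support_iff] using hx
  · have : FreeMonoid.ofList w = FreeMonoid.ofList (FreeMonoid.toList x ++ b) := by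
      rw [FreeMonoid.ofList_append, ← hxy, hy']
      simp
    exact FreeMonoid.ofList.injective this

end CoeffAux

/-! ### `dHat` lemmas -/

section DHatAux
@[simp] theorem dHat_length (jb : List J) (l : List (Letter J X)) :
    (dHat jb l).length = l.length := by
  cases l with
  | nil => rfl
  | cons p v => obtain ⟨a, x⟩ := p; simp [dHat]

@[simp] theorem dHat_nil_idx (l : List (Letter J X)) : dHat ([] : List J) l = l := by
  cases l with
  | nil => rfl
  | cons p v => obtain ⟨a, x⟩ := p; simp [dHat]

theorem dHat_ne_nil {l : List (Letter J X)} (h : l ≠ []) (jb : List J) :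
    dHat jb l ≠ [] := by
  cases l with
  | nil => exact absurd rfl h
  | cons p v => obtain ⟨a, x⟩ := p; simp [dHat]

theorem dHat_dHat (jb ib : List J) (l : List (Letter J X)) :
    dHat jb (dHat ib l) = dHat (jb ++ ib) l := by
  cases l with
  | nil => rfl
  | cons p v => obtain ⟨a, x⟩ := p; simp [dHat]

variable [LinearOrder J] [LinearOrder X]

theorem dHat_mono {u v : List (Letter J X)} (jb : List J)
    (h : DegLexLt u v) : DegLexLt (dHat jb u) (dHat jb v) := by
  rcases h with h | ⟨e, hl⟩
  · exact Or.inl (by simpa using h)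
  · refine Or.inr ⟨by simpa using e, ?_⟩
    cases u with
    | nil => cases v with
      | nil => cases hl
      | cons q v' => simp at e
    | cons p u' =>
      cases v with
      | nil => cases hl
      | cons q v' =>
        obtain ⟨a, x⟩ := p; obtain ⟨b, y⟩ := q
        cases hl with
        | cons hl' => exact List.Lex.cons hl'
        | rel hr =>
          refine List.Lex.rel ?_
          rcases hr with hr | ⟨e2, hr | ⟨e3, hr⟩⟩
          · exact Or.inl hr
          · exact Or.inr ⟨e2, Or.inl (by simpa using hr)⟩
          · exact Or.inr ⟨e2, Or.inr ⟨by simp [e3], List.Lex.append_left _ hr _⟩⟩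

end DHatAux

/-! ### Leading terms of derivatives -/

section DerivAux
variable [LinearOrder J] [LinearOrder X]

theorem coeffW_derivMon_dHat (j : J) (u : List (Letter J X)) (hu : u ≠ []) :
    coeffW (derivMon j u : MonoidAlgebra k (FreeMonoid (Letter J X))) (dHat [j] u) = 1 := by
  classical
  cases u with
  | nil => exact absurd rfl hu
  | cons p v =>
    obtain ⟨a, x⟩ := p
    have h2 : coeffW (monoW [(a, x)] * derivMon j v :
        MonoidAlgebra k (FreeMonoid (Letter J X))) ((j :: a, x) :: v) = 0 := by
      by_contra h
      obtain ⟨u', hu', he⟩ := coeffW_monoW_mul_support h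
      simp only [List.cons_append, List.nil_append] at he
      obtain ⟨he1, -⟩ := List.cons.inj he
      exact List.cons_ne_self j a (congrArg Prod.fst he1)
    have hd : dHat [j] ((a, x) :: v) = (j :: a, x) :: v := by simp [dHat]
    rw [hd]
    show coeffW (monoW ((j :: a, x) :: v) + monoW [(a, x)] * derivMon j v :
        MonoidAlgebra k (FreeMonoid (Letter J X))) ((j :: a, x) :: v) = 1
    rw [coeffW_add, coeffW_monoW, if_pos rfl, h2, add_zero]

theorem derivMon_le (j : J) : ∀ (u w : List (Letter J X)),
    coeffW (derivMon j u : MonoidAlgebra k (FreeMonoid (Letter J X))) w ≠ 0 →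
    w = dHat [j] u ∨ DegLexLt w (dHat [j] u)
  | [], w, h => by simp [derivMon, coeffW] at h
  | (a, x) :: v, w, h => by
    classical
    have hd : dHat [j] ((a, x) :: v) = (j :: a, x) :: v := by simp [dHat]
    replace h : coeffW (monoW ((j :: a, x) :: v) + monoW [(a, x)] * derivMon j v :
        MonoidAlgebra k (FreeMonoid (Letter J X))) w ≠ 0 := h
    rw [coeffW_add] at h
    have hor : coeffW (monoW ((j :: a, x) :: v) :
        MonoidAlgebra k (FreeMonoid (Letter J X))) w ≠ 0 ∨
        coeffW (monoW [(a, x)] * derivMon j v :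
        MonoidAlgebra k (FreeMonoid (Letter J X))) w ≠ 0 := by
      by_contra hc
      push_neg at hc
      rw [hc.1, hc.2, add_zero] at h
      exact h rfl
    rcases hor with h1 | h1
    · have hw : (j :: a, x) :: v = w := by
        by_contra hne
        rw [coeffW_monoW, if_neg hne] at h1
        exact h1 rfl
      exact Or.inl (by rw [hd, ← hw])
    · obtain ⟨u', hu', he⟩ := coeffW_monoW_mul_support h1
      simp only [List.cons_append, List.nil_append] at he
      have hv : v ≠ [] := by
        rintro rfl
        simp [derivMon, coeffW] at hu'
      have hle : u'.length ≤ v.length := by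
        rcases derivMon_le j v u' hu' with rfl | hlt
        · simp
        · rcases hlt with hl | ⟨e, -⟩
          · exact le_of_lt (by simpa using hl)
          · exact le_of_eq (by simpa using e)
      right
      rw [hd, he]
      rcases lt_or_eq_of_le hle with hlt | heq
      · exact Or.inl (by simpa using Nat.succ_lt_succ hlt)
      · refine Or.inr ⟨by simpa using heq, List.Lex.rel ?_⟩
        exact Or.inr ⟨rfl, Or.inl (by simp)⟩

theorem derivMon_lt_of_lt (j : J) {u v : List (Letter J X)}
    (h : DegLexLt u v) {w : List (Letter J X)}
    (hw : coeffW (derivMon j u : MonoidAlgebra k (FreeMonoid (Letter J X))) w ≠ 0) :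
    DegLexLt w (dHat [j] v) := by
  rcases derivMon_le j u w hw with rfl | hlt
  · exact dHat_mono [j] h
  · exact degLexLt_trans hlt (dHat_mono [j] h)

omit [LinearOrder J] [LinearOrder X] in
theorem coeffW_Dop (j : J) (f : MonoidAlgebra k (FreeMonoid (Letter J X)))
    (w : List (Letter J X)) :
    coeffW (Dop j f) w = f.coeff.sum fun u c =>
      c * coeffW (derivMon j (FreeMonoid.toList u) :
        MonoidAlgebra k (FreeMonoid (Letter J X))) w := by
  have h1 : Dop j f = f.coeff.sum fun u c => c • derivMon j (FreeMonoid.toList u) := by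
    rfl
  rw [h1]
  unfold coeffW
  rw [MonoidAlgebra.coeff_finsuppSum, Finsupp.sum_apply]
  rfl

theorem isLT_Dop {s : MonoidAlgebra k (FreeMonoid (Letter J X))} {sb : List (Letter J X)}
    (hs : IsLT s sb) (hsb : sb ≠ []) (j : J) :
    IsLT (Dop j s) (dHat [j] sb) ∧ coeffW (Dop j s) (dHat [j] sb) = coeffW s sb := by
  classical
  have hcoeff : coeffW (Dop j s) (dHat [j] sb) = coeffW s sb := by
    rw [coeffW_Dop]
    rw [Finsupp.sum_eq_single (FreeMonoid.ofList sb)]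
    · rw [show FreeMonoid.toList (FreeMonoid.ofList sb) = sb from FreeMonoid.toList_ofList sb,
        coeffW_derivMon_dHat j sb hsb, mul_one]
      rfl
    · intro u hu hne
      have hsu : coeffW s (FreeMonoid.toList u) ≠ 0 := by
        simpa [coeffW] using hu
      have hult : DegLexLt (FreeMonoid.toList u) sb := by
        apply hs.2 _ hsu
        intro e
        exact hne (by rw [← e]; simp)
      have h0 : coeffW (derivMon j (FreeMonoid.toList u) :
          MonoidAlgebra k (FreeMonoid (Letter J X))) (dHat [j] sb) = 0 := by
        by_contra hcon
        exact degLexLt_irrefl _ (derivMon_lt_of_lt j hult hcon)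
      rw [h0, mul_zero]
    · intro _
      rw [zero_mul]
  refine ⟨⟨?_, ?_⟩, hcoeff⟩
  · rw [hcoeff]; exact hs.1
  · intro w hw hne
    rw [coeffW_Dop] at hw
    have hex : ∃ u ∈ s.coeff.support, s.coeff u * coeffW (derivMon j (FreeMonoid.toList u) :
        MonoidAlgebra k (FreeMonoid (Letter J X))) w ≠ 0 := by
      by_contra hcon
      push_neg at hcon
      exact hw (Finset.sum_eq_zero hcon)
    obtain ⟨u, hu, hne2⟩ := hex
    have hd : coeffW (derivMon j (FreeMonoid.toList u) :
        MonoidAlgebra k (FreeMonoid (Letter J X))) w ≠ 0 :=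
      fun h0 => hne2 (by rw [h0, mul_zero])
    by_cases he : FreeMonoid.toList u = sb
    · rw [he] at hd
      rcases derivMon_le j sb w hd with rfl | hlt
      · exact absurd rfl hne
      · exact hlt
    · have hsu : coeffW s (FreeMonoid.toList u) ≠ 0 := by
        simpa [coeffW] using Finsupp.mem_support_iff.1 hu
      exact derivMon_lt_of_lt j (hs.2 _ hsu he) hd

omit [LinearOrder J] [LinearOrder X] in
theorem Dops_cons (j : J) (ib : List J) (s : MonoidAlgebra k (FreeMonoid (Letter J X))) :
    Dops (j :: ib) s = Dop j (Dops ib s) := rfl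

theorem isLT_Dops {s : MonoidAlgebra k (FreeMonoid (Letter J X))} {sb : List (Letter J X)}
    (hs : IsLT s sb) (hsb : sb ≠ []) :
    ∀ ib : List J, IsLT (Dops ib s) (dHat ib sb) ∧
      coeffW (Dops ib s) (dHat ib sb) = coeffW s sb
  | [] => by
    constructor
    · simpa [Dops] using hs
    · simp [Dops]
  | j :: ib => by
    obtain ⟨h1, h2⟩ := isLT_Dops hs hsb ib
    obtain ⟨h3, h4⟩ := isLT_Dop h1 (dHat_ne_nil hsb ib) j
    rw [dHat_dHat] at h3 h4
    rw [Dops_cons]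
    exact ⟨h3, h4.trans h2⟩

end DerivAux

/-! ### Leading terms of sandwiches and monomials -/

section SandwichAux
variable [LinearOrder J] [LinearOrder X]

theorem isLT_sandwich {g : MonoidAlgebra k (FreeMonoid (Letter J X))} {l : List (Letter J X)}
    (hg : IsLT g l) (a b : List (Letter J X)) :
    IsLT (monoW a * g * monoW b) (a ++ l ++ b) ∧
      coeffW (monoW a * g * monoW b : MonoidAlgebra k (FreeMonoid (Letter J X)))
        (a ++ l ++ b) = coeffW g l := by
  have hc : ∀ u, coeffW (monoW a * g * monoW b :
      MonoidAlgebra k (FreeMonoid (Letter J X))) (a ++ u ++ b) = coeffW g u := by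
    intro u
    rw [coeffW_mul_monoW, coeffW_monoW_mul]
  refine ⟨⟨?_, ?_⟩, hc l⟩
  · rw [hc]; exact hg.1
  · intro w hw hne
    obtain ⟨u', hu', rfl⟩ := coeffW_mul_monoW_support hw
    obtain ⟨u, hu, rfl⟩ := coeffW_monoW_mul_support hu'
    have hune : u ≠ l := fun h => hne (by rw [h])
    exact degLexLt_append a b (hg.2 u hu hune)

theorem isLT_monoW (h1 : (1 : k) ≠ 0) (u : List (Letter J X)) :
    IsLT (monoW u : MonoidAlgebra k (FreeMonoid (Letter J X))) u := by
  classical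
  constructor
  · rw [coeffW_monoW, if_pos rfl]; exact h1
  · intro v hv hne
    rcases eq_or_ne u v with rfl | hne2
    · exact absurd rfl hne
    · rw [coeffW_monoW, if_neg hne2] at hv
      exact absurd rfl hv

theorem finset_exists_max {β : Type*} (r : β → β → Prop)
    (tr : ∀ a b c, r a b → r b c → r a c)
    (tri : ∀ a b, r a b ∨ a = b ∨ r b a) :
    ∀ s : Finset β, s.Nonempty → ∃ u ∈ s, ∀ v ∈ s, v ≠ u → r v u := by
  classical
  intro s
  induction s using Finset.induction_on with
  | empty => exact fun hs => absurd hs (by simp)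
  | @insert a s ha ih =>
    intro _
    rcases s.eq_empty_or_nonempty with rfl | hne
    · exact ⟨a, by simp, by simp⟩
    · obtain ⟨u, hu, hmax⟩ := ih hne
      rcases tri a u with h | he | h
      · refine ⟨u, Finset.mem_insert_of_mem hu, ?_⟩
        intro v hv hvne
        rcases Finset.mem_insert.1 hv with rfl | hv
        · exact h
        · exact hmax v hv hvne
      · refine ⟨u, Finset.mem_insert_of_mem hu, ?_⟩
        intro v hv hvne
        rcases Finset.mem_insert.1 hv with rfl | hv
        · exact absurd he hvne
        · exact hmax v hv hvne
      · refine ⟨a, Finset.mem_insert_self a s, ?_⟩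
        intro v hv hvne
        rcases Finset.mem_insert.1 hv with rfl | hv
        · exact absurd rfl hvne
        · rcases eq_or_ne v u with rfl | hvu
          · exact h
          · exact tr _ _ _ (hmax v hv hvu) h

theorem exists_isLT {f : MonoidAlgebra k (FreeMonoid (Letter J X))} (hf : f ≠ 0) :
    ∃ u, IsLT f u := by
  classical
  have hs : f.coeff.support.Nonempty := Finsupp.support_nonempty_iff.2 (by simpa using hf)
  obtain ⟨u, hu, hmax⟩ := finset_exists_max
    (fun x y : FreeMonoid (Letter J X) =>
      DegLexLt (FreeMonoid.toList x) (FreeMonoid.toList y))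
    (fun _ _ _ h h' => degLexLt_trans h h')
    (fun x y => by
      rcases degLexLt_tricho (FreeMonoid.toList x) (FreeMonoid.toList y) with h | h | h
      · exact Or.inl h
      · exact Or.inr (Or.inl (FreeMonoid.toList.injective h))
      · exact Or.inr (Or.inr h))
    f.coeff.support hs
  refine ⟨FreeMonoid.toList u, ?_, ?_⟩
  · simpa [coeffW] using Finsupp.mem_support_iff.1 hu
  · intro v hv hne
    have hv' : FreeMonoid.ofList v ∈ f.coeff.support :=
      Finsupp.mem_support_iff.2 (by simpa [coeffW] using hv)
    have hvne : FreeMonoid.ofList v ≠ u := by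
      intro e
      exact hne (by rw [← e, FreeMonoid.toList_ofList])
    simpa using hmax _ hv' hvne

theorem isLT_unique {f : MonoidAlgebra k (FreeMonoid (Letter J X))}
    {u v : List (Letter J X)} (hu : IsLT f u) (hv : IsLT f v) : u = v := by
  by_contra hne
  exact degLexLt_irrefl u
    (degLexLt_trans (hv.2 u hu.1 hne) (hu.2 v hv.1 (Ne.symm hne)))

end SandwichAux


/-- Elimination lemma: every `f` is a linear combination of irreducible monomials `≤ f̄`
and `(S,𝒟)`-words with leading term `≤ f̄`. -/
theorem stmt12 [LinearOrder J] [LinearOrder X]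
    [IsWellOrder J (· < ·)] [IsWellOrder X (· < ·)]
    (S : Set (MonoidAlgebra k (FreeMonoid (Letter J X))))
    (hS : ∀ s ∈ S, ∃ sb, MonicW s sb)
    (f : MonoidAlgebra k (FreeMonoid (Letter J X))) (fb : List (Letter J X))
    (hf : IsLT f fb) :
    f ∈ Submodule.span k
      {g | (∃ u ∈ Irr S, (u = fb ∨ DegLexLt u fb) ∧ g = monoW u) ∨
           (IsSDWord S g ∧ ∃ l, IsLT g l ∧ (l = fb ∨ DegLexLt l fb))} := by
  classical
  suffices h : ∀ fb (f : MonoidAlgebra k (FreeMonoid (Letter J X))), IsLT f fb →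
      f ∈ Submodule.span k
        {g | (∃ u ∈ Irr S, (u = fb ∨ DegLexLt u fb) ∧ g = monoW u) ∨
             (IsSDWord S g ∧ ∃ l, IsLT g l ∧ (l = fb ∨ DegLexLt l fb))} by
    exact h fb f hf
  intro fb
  induction fb using WellFounded.induction with
  | hwf => exact degLexLt_wf (J := J) (X := X)
  | _ fb IH =>
  intro f hf
  have hc := hf.1
  have h10 : (1 : k) ≠ 0 := by
    intro h
    apply hc
    have h2 : coeffW f fb = coeffW f fb * 1 := (mul_one _).symm
    rw [h2, h, mul_zero]
  have hsubset : ∀ {w}, DegLexLt w fb →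
      {g | (∃ u ∈ Irr S, (u = w ∨ DegLexLt u w) ∧ g = monoW u) ∨
           (IsSDWord S g ∧ ∃ l, IsLT g l ∧ (l = w ∨ DegLexLt l w))} ⊆
      {g | (∃ u ∈ Irr S, (u = fb ∨ DegLexLt u fb) ∧ g = monoW u) ∨
           (IsSDWord S g ∧ ∃ l, IsLT g l ∧ (l = fb ∨ DegLexLt l fb))} := by
    intro w hw g hg
    rcases hg with ⟨u, hu, hor, rfl⟩ | ⟨hsd, l, hl, hor⟩
    · refine Or.inl ⟨u, hu, Or.inr ?_, rfl⟩
      rcases hor with rfl | h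
      · exact hw
      · exact degLexLt_trans h hw
    · refine Or.inr ⟨hsd, l, hl, Or.inr ?_⟩
      rcases hor with rfl | h
      · exact hw
      · exact degLexLt_trans h hw
  have key : ∀ g : MonoidAlgebra k (FreeMonoid (Letter J X)),
      g ∈ {g | (∃ u ∈ Irr S, (u = fb ∨ DegLexLt u fb) ∧ g = monoW u) ∨
           (IsSDWord S g ∧ ∃ l, IsLT g l ∧ (l = fb ∨ DegLexLt l fb))} →
      IsLT g fb → coeffW g fb = 1 →
      f ∈ Submodule.span k
        {g | (∃ u ∈ Irr S, (u = fb ∨ DegLexLt u fb) ∧ g = monoW u) ∨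
             (IsSDWord S g ∧ ∃ l, IsLT g l ∧ (l = fb ∨ DegLexLt l fb))} := by
    intro g hget hglt hg1
    by_cases hr : f - coeffW f fb • g = 0
    · rw [sub_eq_zero] at hr
      rw [hr]
      exact Submodule.smul_mem _ _ (Submodule.subset_span hget)
    · obtain ⟨rb, hrb⟩ := exists_isLT hr
      have h0 : coeffW (f - coeffW f fb • g) fb = 0 := by
        rw [coeffW_sub, coeffW_smul, hg1, mul_one, sub_self]
      have hne : rb ≠ fb := by
        rintro rfl
        exact hrb.1 h0
      have hlt : DegLexLt rb fb := by
        have hco := hrb.1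
        rw [coeffW_sub, coeffW_smul] at hco
        have hor : coeffW f rb ≠ 0 ∨ coeffW g rb ≠ 0 := by
          by_contra hcon
          push_neg at hcon
          rw [hcon.1, hcon.2, mul_zero, sub_zero] at hco
          exact hco rfl
        rcases hor with h | h
        · exact hf.2 rb h hne
        · exact hglt.2 rb h hne
      have hmem := IH rb hlt (f - coeffW f fb • g) hrb
      have hmem2 := Submodule.span_mono (hsubset hlt) hmem
      have heq : f = (f - coeffW f fb • g) + coeffW f fb • g := by abel
      rw [heq]
      exact Submodule.add_mem _ hmem2
        (Submodule.smul_mem _ _ (Submodule.subset_span hget))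
  by_cases hirr : fb ∈ Irr S
  · refine key (monoW fb) (Or.inl ⟨fb, hirr, Or.inl rfl, rfl⟩) (isLT_monoW h10 fb) ?_
    rw [coeffW_monoW, if_pos rfl]
  · simp only [Irr, Set.mem_setOf_eq, not_not] at hirr
    obtain ⟨a, b, ib, s, hsS, sb, hslt, hfb⟩ := hirr
    obtain ⟨sb', hmon'⟩ := hS s hsS
    have hsbeq : sb' = sb := isLT_unique hmon'.1 hslt
    have hmono : MonicW s sb := hsbeq ▸ hmon'
    have main2 : ∀ ib' : List J, fb = a ++ dHat ib' sb ++ b →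
        IsLT (Dops ib' s) (dHat ib' sb) →
        coeffW (Dops ib' s) (dHat ib' sb) = 1 →
        f ∈ Submodule.span k
          {g | (∃ u ∈ Irr S, (u = fb ∨ DegLexLt u fb) ∧ g = monoW u) ∨
               (IsSDWord S g ∧ ∃ l, IsLT g l ∧ (l = fb ∨ DegLexLt l fb))} := by
      intro ib' hfb' hD1 hD2
      obtain ⟨hglt, hgco⟩ := isLT_sandwich hD1 a b
      refine key (monoW a * Dops ib' s * monoW b)
        (Or.inr ⟨⟨a, b, ib', s, hsS, rfl⟩, fb, ?_, Or.inl rfl⟩) ?_ ?_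
      · rw [hfb']; exact hglt
      · rw [hfb']; exact hglt
      · rw [hfb', hgco]; exact hD2
    by_cases hnil : sb = []
    · subst hnil
      refine main2 [] ?_ ?_ ?_
      · exact hfb
      · simpa [Dops] using hslt
      · simpa [Dops, coeffW] using hmono.2
    · exact main2 ib hfb (isLT_Dops hslt hnil ib).1
        ((isLT_Dops hslt hnil ib).2.trans hmono.2)
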